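/- Let 𝒳 = (X, d_X, μ) and 𝒴 = (Y, d_Y, ν) be compact metric measure spaces, n ≥ 2, p ≥ 1, R = max{diam(X), diam(Y)}, and let σ be a probability distribution on Θ_{n,p}. Suppose SDMW_{n,p}(𝒳, 𝒴)^p ≥ ε^p for some ε > 0, and let γ, δ ∈ (0,1). If L ≥ (R^{2p}/(2 γ² ε^{2p})) log(1/δ), then with probability at least 1 − δ over i.i.d. directions θ_1, …, θ_L ∼ σ, (1/L) Σ_{ℓ=1}^L W_p^p((P_{θ_ℓ})_# ρ_X^{(n)}, (P_{θ_ℓ})_# ρ_Y^{(n)}) ≥ (1 − γ) ε^p. -/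

import Mathlib

/-! For `θ ∈ Θ_{n,p}` each summand `W_p^p((P_θ)_# ρ_X, (P_θ)_# ρ_Y)` lies in `[0, R^p]`: couple the
two projected laws through independent samples from `μ` and `ν`; Hölder duality between
`‖·‖_{q,dual}` and `‖·‖_{p,avg}` gives `|P_θ a - P_θ b| ≤ ‖a - b‖_{p,avg}`, and two distance
matrices differ entrywise by at most `R`. The summands are i.i.d. with mean
`SDMW_{n,p}^p ≥ ε^p`, so by Hoeffding's inequality their average falls below `(1 - γ) ε^p` with
probability at most `exp (-2 L γ² ε^{2p} / R^{2p}) ≤ δ`. -/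

open MeasureTheory Filter
open scoped ENNReal NNReal

noncomputable section

/-- The set of couplings of two measures: probability measures on the product
whose marginals are the two given measures. -/
def couplings {X Y : Type*} [MeasurableSpace X] [MeasurableSpace Y]
    (μ : Measure X) (ν : Measure Y) : Set (Measure (X × Y)) :=
  {π | π.map Prod.fst = μ ∧ π.map Prod.snd = ν}

/-- The `p`-Wasserstein distance associated with a cost/distance function `d` on `Z`:
`W_p(α,β) = (inf_{γ ∈ Π(α,β)} ∫ d(z,z')^p dγ)^{1/p}`. -/
def Wp {Z : Type*} [MeasurableSpace Z] (p : ℝ) (d : Z → Z → ℝ)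
    (α β : Measure Z) : ℝ :=
  sInf {c : ℝ | ∃ π ∈ couplings α β, c = ∫ z, d z.1 z.2 ^ p ∂π} ^ (1 / p)

/-- The Gromov–Wasserstein distance between `(X, dX, μ)` and `(Y, dY, ν)`:
`GW_p = (inf_{π ∈ Π(μ,ν)} ∬ |dX(x,x') - dY(y,y')|^p dπ dπ)^{1/p}`. -/
def GW {X Y : Type*} [MeasurableSpace X] [MeasurableSpace Y]
    (p : ℝ) (dX : X → X → ℝ) (dY : Y → Y → ℝ)
    (μ : Measure X) (ν : Measure Y) : ℝ :=
  sInf {c : ℝ | ∃ π ∈ couplings μ ν,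
      c = ∫ w, |dX w.1.1 w.2.1 - dY w.1.2 w.2.2| ^ p ∂(π.prod π)} ^ (1 / p)

/-- The index set of unordered pairs `i < j` of `Fin n`; it has `n.choose 2` elements. -/
abbrev PairIdx (n : ℕ) := {ij : Fin n × Fin n // ij.1 < ij.2}

/-- The order-`n` distance-matrix map `T_X^{(n)}`. -/
def dmMap {X : Type*} (n : ℕ) (dX : X → X → ℝ) (x : Fin n → X) : PairIdx n → ℝ :=
  fun ij => dX (x ij.1.1) (x ij.1.2)

/-- The order-`n` distance-matrix law `ρ_X^{(n)} = (T_X^{(n)})_# μ^{⊗n}`. -/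
def dmLaw {X : Type*} [MeasurableSpace X] (n : ℕ) (dX : X → X → ℝ) (μ : Measure X) :
    Measure (PairIdx n → ℝ) :=
  (Measure.pi fun _ : Fin n => μ).map (dmMap n dX)

/-- The normalized averaged `ℓ^p` metric `‖a-b‖_{p,avg}` on distance matrices. -/
def avgDist (n : ℕ) (p : ℝ) (a b : PairIdx n → ℝ) : ℝ :=
  ((n.choose 2 : ℝ)⁻¹ * ∑ ij : PairIdx n, |a ij - b ij| ^ p) ^ (1 / p)

/-- The order-`n` Distance-Matrix Wasserstein statistic
`DMW_{n,p}(𝒳,𝒴) = W_p(ρ_X^{(n)}, ρ_Y^{(n)})` for the metric `‖·‖_{p,avg}`. -/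
def DMW {X Y : Type*} [MeasurableSpace X] [MeasurableSpace Y]
    (n : ℕ) (p : ℝ) (dX : X → X → ℝ) (dY : Y → Y → ℝ)
    (μ : Measure X) (ν : Measure Y) : ℝ :=
  Wp p (avgDist n p) (dmLaw n dX μ) (dmLaw n dY ν)

/-- The empirical measure `(1/n) Σ_{i} δ_{x i}` of an `n`-tuple of points. -/
def empMeas {Z : Type*} [MeasurableSpace Z] (n : ℕ) (x : Fin n → Z) : Measure Z :=
  (n : ℝ≥0∞)⁻¹ • ∑ i : Fin n, Measure.dirac (x i)

/-- The expected empirical Wasserstein approximation error `𝔼 W_p(μ, μ̂_n)`,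
where the expectation is over `n` i.i.d. samples from `μ`. -/
def expEmpWp {X : Type*} [MeasurableSpace X] (p : ℝ) (d : X → X → ℝ)
    (μ : Measure X) (n : ℕ) : ℝ :=
  ∫ x, Wp p d μ (empMeas n x) ∂(Measure.pi fun _ : Fin n => μ)

/-- The dual norm `‖θ‖_{q,dual} = N_n^{1/p} ‖θ‖_q`, with `q` the Hölder conjugate
of `p` (`q = ∞` when `p = 1`). -/
def dualNorm (n : ℕ) (p : ℝ) (θ : PairIdx n → ℝ) : ℝ :=
  if p = 1 then (n.choose 2 : ℝ) * ⨆ ij : PairIdx n, |θ ij|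
  else (n.choose 2 : ℝ) ^ (1 / p) *
    (∑ ij : PairIdx n, |θ ij| ^ (p / (p - 1))) ^ ((p - 1) / p)

/-- The linear projection `P_θ(a) = ⟨θ, a⟩` on distance matrices. -/
def proj (n : ℕ) (θ : PairIdx n → ℝ) (a : PairIdx n → ℝ) : ℝ :=
  ∑ ij : PairIdx n, θ ij * a ij

/-- The sliced Distance-Matrix Wasserstein statistic
`SDMW_{n,p}(𝒳,𝒴) = (𝔼_{θ∼σ} W_p^p((P_θ)_# ρ_X^{(n)}, (P_θ)_# ρ_Y^{(n)}))^{1/p}`. -/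
def SDMW {X Y : Type*} [MeasurableSpace X] [MeasurableSpace Y]
    (n : ℕ) (p : ℝ) (σ : Measure (PairIdx n → ℝ))
    (dX : X → X → ℝ) (dY : Y → Y → ℝ) (μ : Measure X) (ν : Measure Y) : ℝ :=
  (∫ θ, Wp p (fun s t : ℝ => |s - t|)
      ((dmLaw n dX μ).map (proj n θ)) ((dmLaw n dY ν).map (proj n θ)) ^ p ∂σ) ^ (1 / p)

/-- The support of a measure with respect to an explicit distance function. -/
def suppOf {X : Type*} [MeasurableSpace X] (d : X → X → ℝ) (μ : Measure X) : Set X :=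
  {x | ∀ ε : ℝ, 0 < ε → 0 < μ {y | d x y < ε}}

/-- Two metric measure spaces are measure-preserving isometric: there is a surjective
isometry between the supports pushing the first measure to the second. -/
def MPIsoD {X Y : Type*} [MeasurableSpace X] [MeasurableSpace Y]
    (dX : X → X → ℝ) (dY : Y → Y → ℝ) (μ : Measure X) (ν : Measure Y) : Prop :=
  ∃ φ : suppOf dX μ → suppOf dY ν,
    Function.Surjective φ ∧
    (∀ a b : suppOf dX μ, dY (φ a).1 (φ b).1 = dX a.1 b.1) ∧
    (μ.comap (Subtype.val : suppOf dX μ → X)).map φ =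
      ν.comap (Subtype.val : suppOf dY ν → Y)

open Set ProbabilityTheory

section Wasserstein

variable {Z : Type*} [MeasurableSpace Z] {p : ℝ} {d : Z → Z → ℝ} {α β : Measure Z}

theorem nonneg_of_mem_transportCosts (hd : ∀ z w, 0 ≤ d z w) {c : ℝ}
    (hc : c ∈ {c : ℝ | ∃ π ∈ couplings α β, c = ∫ z, d z.1 z.2 ^ p ∂π}) : 0 ≤ c := by
  obtain ⟨π, -, rfl⟩ := hc
  exact integral_nonneg fun _ => Real.rpow_nonneg (hd _ _) p

theorem Wp_nonneg (hd : ∀ z w, 0 ≤ d z w) : 0 ≤ Wp p d α β :=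
  Real.rpow_nonneg (Real.sInf_nonneg fun _ => nonneg_of_mem_transportCosts hd) _

theorem Wp_le_of_mem_couplings (hp : 0 < p) (hd : ∀ z w, 0 ≤ d z w) {π : Measure (Z × Z)}
    (hπ : π ∈ couplings α β) {C : ℝ} (hC : 0 ≤ C) (hcost : ∫ z, d z.1 z.2 ^ p ∂π ≤ C ^ p) :
    Wp p d α β ≤ C := by
  have hinf : sInf {c : ℝ | ∃ π ∈ couplings α β, c = ∫ z, d z.1 z.2 ^ p ∂π} ≤ C ^ p :=
    (csInf_le ⟨0, fun _ => nonneg_of_mem_transportCosts hd⟩ ⟨π, hπ, rfl⟩).trans hcost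
  calc Wp p d α β ≤ (C ^ p) ^ (1 / p) :=
        Real.rpow_le_rpow (Real.sInf_nonneg fun _ => nonneg_of_mem_transportCosts hd) hinf
          (by positivity)
    _ = C := by rw [one_div, Real.rpow_rpow_inv hC hp.ne']

variable {Ω : Type*} [MeasurableSpace Ω]

theorem map_prodMk_mem_couplings (P : Measure Ω) {F G : Ω → Z} (hF : Measurable F)
    (hG : Measurable G) :
    P.map (fun ω => (F ω, G ω)) ∈ couplings (P.map F) (P.map G) :=
  ⟨by rw [Measure.map_map measurable_fst (hF.prodMk hG)]; rfl,
    by rw [Measure.map_map measurable_snd (hF.prodMk hG)]; rfl⟩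

theorem Wp_map_le_of_forall_le {P : Measure Ω} [IsProbabilityMeasure P] (hp : 0 < p)
    (hd : ∀ z w, 0 ≤ d z w) (hdm : Measurable fun z : Z × Z => d z.1 z.2)
    {F G : Ω → Z} (hF : Measurable F) (hG : Measurable G) {C : ℝ} (hC : 0 ≤ C)
    (hFG : ∀ ω, d (F ω) (G ω) ≤ C) :
    Wp p d (P.map F) (P.map G) ≤ C := by
  refine Wp_le_of_mem_couplings hp hd (map_prodMk_mem_couplings P hF hG) hC ?_
  have hbound (ω : Ω) : ‖d (F ω) (G ω) ^ p‖ ≤ C ^ p := by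
    rw [Real.norm_eq_abs, abs_of_nonneg (Real.rpow_nonneg (hd _ _) p)]
    exact Real.rpow_le_rpow (hd _ _) (hFG ω) hp.le
  rw [integral_map (hF.prodMk hG).aemeasurable (hdm.pow_const p).aestronglyMeasurable]
  simpa using (le_abs_self _).trans (norm_integral_le_of_norm_le_const (ae_of_all P hbound))

end Wasserstein

section DistanceMatrices

variable {n : ℕ} {p : ℝ}

theorem card_pairIdx (n : ℕ) : Fintype.card (PairIdx n) = n.choose 2 := by
  have e : PairIdx n ≃ Σ j : Fin n, Fin j :=
    { toFun := fun x => ⟨x.1.2, ⟨x.1.1, x.2⟩⟩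
      invFun := fun y => ⟨(⟨y.2, y.2.isLt.trans y.1.isLt⟩, y.1), y.2.isLt⟩
      left_inv := fun _ => rfl
      right_inv := fun _ => rfl }
  rw [Fintype.card_congr e, Fintype.card_sigma]
  simp only [Fintype.card_fin]
  rw [Fin.sum_univ_eq_sum_range (fun i => i) n, Nat.choose_two_right]
  have := Finset.sum_range_id_mul_two n
  omega

theorem choose_two_mul_inv_choose_two_mul_sum (g : PairIdx n → ℝ) :
    (n.choose 2 : ℝ) * ((n.choose 2 : ℝ)⁻¹ * ∑ ij, g ij) = ∑ ij, g ij := by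
  rcases eq_or_ne (n.choose 2 : ℝ) 0 with h | h
  · have : IsEmpty (PairIdx n) := by
      rw [← Fintype.card_eq_zero_iff, card_pairIdx]
      exact_mod_cast h
    simp
  · rw [mul_inv_cancel_left₀ h]

theorem dualNorm_nonneg (θ : PairIdx n → ℝ) : 0 ≤ dualNorm n p θ := by
  unfold dualNorm
  split_ifs
  · exact mul_nonneg (Nat.cast_nonneg _) (Real.iSup_nonneg fun _ => abs_nonneg _)
  · positivity

theorem abs_proj_sub_le_dualNorm_mul_avgDist (hp : 1 ≤ p) (θ a b : PairIdx n → ℝ) :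
    |proj n θ a - proj n θ b| ≤ dualNorm n p θ * avgDist n p a b := by
  set N : ℝ := (n.choose 2 : ℝ)
  have hinner : |proj n θ a - proj n θ b| ≤ ∑ ij, |θ ij| * |a ij - b ij| := by
    simp only [proj, ← Finset.sum_sub_distrib, ← mul_sub, ← abs_mul]
    exact Finset.abs_sum_le_sum_abs _ _
  refine hinner.trans ?_
  rcases hp.eq_or_lt with rfl | hp1
  · set S := ⨆ ij, |θ ij|
    have hS (ij : PairIdx n) : |θ ij| ≤ S :=
      le_ciSup (f := fun ij => |θ ij|) (Set.finite_range _).bddAbove ij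
    calc ∑ ij, |θ ij| * |a ij - b ij| ≤ ∑ ij, S * |a ij - b ij| :=
          Finset.sum_le_sum fun ij _ => mul_le_mul_of_nonneg_right (hS ij) (abs_nonneg _)
      _ = N * S * (N⁻¹ * ∑ ij, |a ij - b ij|) := by
          rw [mul_comm N, mul_assoc, choose_two_mul_inv_choose_two_mul_sum, Finset.mul_sum]
      _ = dualNorm n 1 θ * avgDist n 1 a b := by simp [dualNorm, avgDist, N, S]
  · have hpq : p.HolderConjugate (p / (p - 1)) := Real.HolderConjugate.conjExponent hp1
    have hlp : (∑ ij, |a ij - b ij| ^ p) ^ (1 / p) = N ^ (1 / p) * avgDist n p a b := by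
      rw [avgDist, ← Real.mul_rpow (by positivity) (by positivity),
        choose_two_mul_inv_choose_two_mul_sum]
    calc ∑ ij, |θ ij| * |a ij - b ij|
        = ∑ ij, |a ij - b ij| * |θ ij| := by simp only [mul_comm]
      _ ≤ (∑ ij, |a ij - b ij| ^ p) ^ (1 / p) *
            (∑ ij, |θ ij| ^ (p / (p - 1))) ^ (1 / (p / (p - 1))) := by
          simpa only [abs_abs] using
            Real.inner_le_Lp_mul_Lq Finset.univ (fun ij => |a ij - b ij|) (fun ij => |θ ij|) hpq
      _ = dualNorm n p θ * avgDist n p a b := by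
          rw [hlp, dualNorm, if_neg hp1.ne', one_div_div]
          ring

theorem avgDist_le_of_forall_abs_sub_le (hp : 0 < p) {a b : PairIdx n → ℝ} {R : ℝ}
    (hR : 0 ≤ R) (hab : ∀ ij, |a ij - b ij| ≤ R) : avgDist n p a b ≤ R := by
  set N : ℝ := (n.choose 2 : ℝ)
  have hsum : ∑ ij, |a ij - b ij| ^ p ≤ N * R ^ p := by
    calc ∑ ij, |a ij - b ij| ^ p ≤ ∑ _ij : PairIdx n, R ^ p :=
          Finset.sum_le_sum fun ij _ => Real.rpow_le_rpow (abs_nonneg _) (hab ij) hp.le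
      _ = N * R ^ p := by simp [N, card_pairIdx]
  have hmean : N⁻¹ * ∑ ij, |a ij - b ij| ^ p ≤ R ^ p := by
    rcases eq_or_ne N 0 with h | h
    · simp only [h, inv_zero, zero_mul]; positivity
    · calc N⁻¹ * ∑ ij, |a ij - b ij| ^ p ≤ N⁻¹ * (N * R ^ p) := by gcongr
        _ = R ^ p := inv_mul_cancel_left₀ h _
  calc avgDist n p a b ≤ (R ^ p) ^ (1 / p) :=
        Real.rpow_le_rpow (by positivity) hmean (by positivity)
    _ = R := by rw [one_div, Real.rpow_rpow_inv hR hp.ne']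

theorem measurable_proj (θ : PairIdx n → ℝ) : Measurable (proj n θ) := by
  unfold proj; fun_prop

theorem measurable_dmMap {X : Type*} [PseudoMetricSpace X] [SecondCountableTopology X]
    [MeasurableSpace X] [BorelSpace X] : Measurable (dmMap n (dist : X → X → ℝ)) :=
  measurable_pi_lambda _ fun _ => (measurable_pi_apply _).dist (measurable_pi_apply _)

end DistanceMatrices

theorem Wp_map_proj_dmLaw_le {X Y : Type*}
    [PseudoMetricSpace X] [SecondCountableTopology X] [BoundedSpace X] [MeasurableSpace X]
    [BorelSpace X]
    [PseudoMetricSpace Y] [SecondCountableTopology Y] [BoundedSpace Y] [MeasurableSpace Y]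
    [BorelSpace Y]
    (μ : Measure X) (ν : Measure Y) [IsProbabilityMeasure μ] [IsProbabilityMeasure ν]
    {n : ℕ} {p : ℝ} (hp : 1 ≤ p) (θ : PairIdx n → ℝ) :
    Wp p (fun s t : ℝ => |s - t|) ((dmLaw n dist μ).map (proj n θ))
        ((dmLaw n dist ν).map (proj n θ)) ≤
      dualNorm n p θ * max (Metric.diam (univ : Set X)) (Metric.diam (univ : Set Y)) := by
  set D := max (Metric.diam (univ : Set X)) (Metric.diam (univ : Set Y))
  have hD : 0 ≤ D := le_max_of_le_left Metric.diam_nonneg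
  have hentry (x : Fin n → X) (y : Fin n → Y) (ij : PairIdx n) :
      |dmMap n dist x ij - dmMap n dist y ij| ≤ D :=
    abs_sub_le_of_nonneg_of_le dist_nonneg
      (le_max_of_le_left (Metric.dist_le_diam_of_mem BoundedSpace.bounded_univ trivial trivial))
      dist_nonneg
      (le_max_of_le_right (Metric.dist_le_diam_of_mem BoundedSpace.bounded_univ trivial trivial))
  set P := (Measure.pi fun _ : Fin n => μ).prod (Measure.pi fun _ : Fin n => ν)
  have hTX : Measurable (proj n θ ∘ dmMap n (dist : X → X → ℝ)) :=
    (measurable_proj θ).comp measurable_dmMap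
  have hTY : Measurable (proj n θ ∘ dmMap n (dist : Y → Y → ℝ)) :=
    (measurable_proj θ).comp measurable_dmMap
  have hX : (dmLaw n dist μ).map (proj n θ) = P.map ((proj n θ ∘ dmMap n dist) ∘ Prod.fst) := by
    rw [← Measure.map_map hTX measurable_fst, Measure.map_fst_prod, measure_univ, one_smul,
      dmLaw, Measure.map_map (measurable_proj θ) measurable_dmMap]
  have hY : (dmLaw n dist ν).map (proj n θ) = P.map ((proj n θ ∘ dmMap n dist) ∘ Prod.snd) := by
    rw [← Measure.map_map hTY measurable_snd, Measure.map_snd_prod, measure_univ, one_smul,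
      dmLaw, Measure.map_map (measurable_proj θ) measurable_dmMap]
  rw [hX, hY]
  refine Wp_map_le_of_forall_le (by linarith) (fun _ _ => abs_nonneg _)
    (measurable_fst.sub measurable_snd).abs
    (hTX.comp measurable_fst) (hTY.comp measurable_snd)
    (mul_nonneg (dualNorm_nonneg θ) hD) fun w => ?_
  refine (abs_proj_sub_le_dualNorm_mul_avgDist hp θ _ _).trans ?_
  exact mul_le_mul_of_nonneg_left
    (avgDist_le_of_forall_abs_sub_le (by linarith) hD (hentry w.1 w.2)) (dualNorm_nonneg θ)

section Hoeffding

variable {α : Type*} [MeasurableSpace α] {σ : Measure α} [IsProbabilityMeasure σ] {f : α → ℝ}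
  {a b : ℝ}

theorem measureReal_pi_sum_le_sub_le (hf : AEMeasurable f σ)
    (hfab : ∀ᵐ θ ∂σ, f θ ∈ Icc a b) (L : ℕ) {t : ℝ} (ht : 0 ≤ t) :
    (Measure.pi fun _ : Fin L => σ).real {Θ | ∑ ℓ, f (Θ ℓ) ≤ L * σ[f] - t} ≤
      Real.exp (-2 * t ^ 2 / (L * (b - a) ^ 2)) := by
  set P := Measure.pi fun _ : Fin L => σ
  have hsub : ∀ ℓ : Fin L, HasSubgaussianMGF (fun Θ : Fin L → α => σ[f] - f (Θ ℓ))
      ((‖b - a‖₊ / 2) ^ 2) P := by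
    intro ℓ
    have hfℓ : AEMeasurable (fun Θ : Fin L → α => f (Θ ℓ)) P :=
      hf.comp_quasiMeasurePreserving (Measure.quasiMeasurePreserving_eval _ ℓ)
    have hmean : P[fun Θ => f (Θ ℓ)] = σ[f] := integral_comp_eval hf.aestronglyMeasurable
    have hfℓab : ∀ᵐ Θ ∂P, f (Θ ℓ) ∈ Icc a b :=
      (Measure.quasiMeasurePreserving_eval (fun _ => σ) ℓ).ae (p := (· ∈ Icc a b) ∘ f) hfab
    refine (hasSubgaussianMGF_of_mem_Icc hfℓ hfℓab).neg.congr (ae_of_all _ fun Θ => ?_)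
    simp [hmean]
  have hindep : iIndepFun (fun (ℓ : Fin L) (Θ : Fin L → α) => σ[f] - f (Θ ℓ)) P :=
    iIndepFun_pi (X := fun _ θ => σ[f] - f θ) fun _ => aemeasurable_const.sub hf
  have hhoeffding := HasSubgaussianMGF.measure_sum_ge_le_of_iIndepFun hindep
    (s := Finset.univ) (fun ℓ _ => hsub ℓ) ht
  refine le_trans (measureReal_mono ?_ ?_) (hhoeffding.trans_eq ?_)
  · intro Θ hΘ
    simp only [mem_ofPred_eq, Finset.sum_sub_distrib, Finset.sum_const, Finset.card_univ,
      Fintype.card_fin, nsmul_eq_mul] at hΘ ⊢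
    linarith
  · exact measure_ne_top _ _
  · simp only [Finset.sum_const, Finset.card_univ, Fintype.card_fin, nsmul_eq_mul]
    push_cast
    rw [div_pow, Real.norm_eq_abs, sq_abs]
    congr 1
    field_simp

theorem ofReal_one_sub_le_measure_pi_le_avg (hab : a < b) (hf : AEMeasurable f σ)
    (hfab : ∀ᵐ θ ∂σ, f θ ∈ Icc a b) {c t δ : ℝ} (ht : 0 < t) (hc : c ≤ σ[f] - t)
    (hδ : δ ∈ Ioo 0 1) {L : ℕ} (hL : (b - a) ^ 2 / (2 * t ^ 2) * Real.log (1 / δ) ≤ L) :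
    ENNReal.ofReal (1 - δ) ≤
      (Measure.pi fun _ : Fin L => σ) {Θ | c ≤ (L : ℝ)⁻¹ * ∑ ℓ, f (Θ ℓ)} := by
  set P := Measure.pi fun _ : Fin L => σ
  have hlog : 0 < Real.log (1 / δ) := Real.log_pos (one_lt_one_div hδ.1 hδ.2)
  have hba : 0 < (b - a) ^ 2 := by have := sub_pos.2 hab; positivity
  have hL0 : (0 : ℝ) < L := lt_of_lt_of_le (by positivity) hL
  have hbad : {Θ | c ≤ (L : ℝ)⁻¹ * ∑ ℓ, f (Θ ℓ)}ᶜ ⊆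
      {Θ : Fin L → α | ∑ ℓ, f (Θ ℓ) ≤ L * σ[f] - L * t} := by
    intro Θ hΘ
    simp only [mem_compl_iff, mem_ofPred_eq, not_le, inv_mul_lt_iff₀ hL0] at hΘ ⊢
    nlinarith
  have htail : Real.exp (-2 * (L * t) ^ 2 / (L * (b - a) ^ 2)) ≤ δ := by
    have hlog_le : Real.log (1 / δ) ≤ 2 * t ^ 2 * L / (b - a) ^ 2 := by
      rw [le_div_iff₀ hba]
      have := mul_le_mul_of_nonneg_left hL (by positivity : (0 : ℝ) ≤ 2 * t ^ 2)
      rw [← mul_assoc, mul_div_cancel₀ _ (by positivity)] at this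
      linarith
    rw [← Real.exp_log hδ.1, Real.exp_le_exp]
    calc -2 * (L * t) ^ 2 / (L * (b - a) ^ 2) = -(2 * t ^ 2 * L / (b - a) ^ 2) := by
          field_simp
      _ ≤ -Real.log (1 / δ) := neg_le_neg hlog_le
      _ = Real.log δ := by rw [one_div, Real.log_inv, neg_neg]
  have hPbad : P {Θ | c ≤ (L : ℝ)⁻¹ * ∑ ℓ, f (Θ ℓ)}ᶜ ≤ ENNReal.ofReal δ := by
    refine (measure_mono hbad).trans ?_
    rw [← ofReal_measureReal]
    exact ENNReal.ofReal_le_ofReal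
      ((measureReal_pi_sum_le_sub_le hf hfab L (by positivity)).trans htail)
  rw [ENNReal.ofReal_sub _ hδ.1.le, ENNReal.ofReal_one, tsub_le_iff_right,
    ← measure_univ (μ := P)]
  exact (measure_univ_le_add_compl _).trans (by gcongr)

end Hoeffding

theorem finite_direction_separation_general {X Y : Type*}
    [MetricSpace X] [CompactSpace X] [MeasurableSpace X] [BorelSpace X]
    [MetricSpace Y] [CompactSpace Y] [MeasurableSpace Y] [BorelSpace Y]
    (μ : Measure X) (ν : Measure Y) [IsProbabilityMeasure μ] [IsProbabilityMeasure ν]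
    (n : ℕ) (p : ℝ) (hp : 1 ≤ p)
    (R : ℝ)
    (hR : R = max (Metric.diam (Set.univ : Set X)) (Metric.diam (Set.univ : Set Y)))
    (σ : Measure (PairIdx n → ℝ)) [IsProbabilityMeasure σ]
    (hσ : ∀ᵐ θ ∂σ, dualNorm n p θ ≤ 1)
    (ε : ℝ) (hε : 0 < ε)
    (hsignal : ε ^ p ≤ SDMW n p σ dist dist μ ν ^ p)
    (γ δ : ℝ) (hγ : γ ∈ Set.Ioo (0 : ℝ) 1) (hδ : δ ∈ Set.Ioo (0 : ℝ) 1)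
    (L : ℕ)
    (hL : R ^ (2 * p) / (2 * γ ^ 2 * ε ^ (2 * p)) * Real.log (1 / δ) ≤ (L : ℝ)) :
    ENNReal.ofReal (1 - δ) ≤
      (Measure.pi fun _ : Fin L => σ)
        {Θ | (1 - γ) * ε ^ p ≤
          (L : ℝ)⁻¹ * ∑ ℓ : Fin L,
            Wp p (fun s t : ℝ => |s - t|) ((dmLaw n dist μ).map (proj n (Θ ℓ)))
              ((dmLaw n dist ν).map (proj n (Θ ℓ))) ^ p} := by
  have hp0 : 0 < p := by linarith
  have hR0 : 0 ≤ R := by rw [hR]; exact le_max_of_le_left Metric.diam_nonneg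
  have hεp : 0 < ε ^ p := Real.rpow_pos_of_pos hε p
  set f : (PairIdx n → ℝ) → ℝ := fun θ => Wp p (fun s t : ℝ => |s - t|)
    ((dmLaw n dist μ).map (proj n θ)) ((dmLaw n dist ν).map (proj n θ)) ^ p
  have hWp_nonneg (θ : PairIdx n → ℝ) : 0 ≤ Wp p (fun s t : ℝ => |s - t|)
      ((dmLaw n dist μ).map (proj n θ)) ((dmLaw n dist ν).map (proj n θ)) :=
    Wp_nonneg fun s t => abs_nonneg (s - t)
  have hf_mem : ∀ᵐ θ ∂σ, f θ ∈ Icc 0 (R ^ p) := by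
    filter_upwards [hσ] with θ hθ
    have hWR := (Wp_map_proj_dmLaw_le μ ν hp θ).trans
      ((mul_le_of_le_one_left (hR ▸ hR0) hθ).trans_eq hR.symm)
    exact ⟨Real.rpow_nonneg (hWp_nonneg θ) p, Real.rpow_le_rpow (hWp_nonneg θ) hWR hp0.le⟩
  have hint : Integrable f σ := by
    by_contra h
    rw [SDMW, integral_undef h, Real.zero_rpow (by positivity), Real.zero_rpow hp0.ne'] at hsignal
    linarith
  have hmean : ε ^ p ≤ σ[f] := by
    rwa [SDMW, ← Real.rpow_mul (integral_nonneg fun θ => Real.rpow_nonneg (hWp_nonneg θ) p),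
      one_div_mul_cancel hp0.ne', Real.rpow_one] at hsignal
  have hRp : 0 < R ^ p := hεp.trans_le <| hmean.trans <| by
    simpa using integral_mono_ae hint (integrable_const _) (hf_mem.mono fun _ h => h.2)
  refine ofReal_one_sub_le_measure_pi_le_avg hRp hint.aemeasurable hf_mem
    (mul_pos hγ.1 hεp) (by linarith) hδ ?_
  rwa [sub_zero, mul_pow, ← Real.rpow_mul_natCast hR0, ← Real.rpow_mul_natCast hε.le,
    Nat.cast_ofNat, mul_comm p 2, ← mul_assoc]

/-- **Finite-direction separation.**
If the population sliced signal satisfies `SDMW_{n,p}(𝒳,𝒴)^p ≥ ε^p` and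
`L ≥ (R^{2p}/(2γ²ε^{2p})) log(1/δ)`, then with probability at least `1 − δ`
over `L` i.i.d. directions `θ_ℓ ∼ σ`, the direction-averaged projected
transport cost is at least `(1 − γ) ε^p`. -/
theorem finite_direction_separation {X Y : Type*}
    [MetricSpace X] [CompactSpace X] [MeasurableSpace X] [BorelSpace X]
    [MetricSpace Y] [CompactSpace Y] [MeasurableSpace Y] [BorelSpace Y]
    (μ : Measure X) (ν : Measure Y) [IsProbabilityMeasure μ] [IsProbabilityMeasure ν]
    (n : ℕ) (hn : 2 ≤ n) (p : ℝ) (hp : 1 ≤ p)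
    (R : ℝ)
    (hR : R = max (Metric.diam (Set.univ : Set X)) (Metric.diam (Set.univ : Set Y)))
    (σ : Measure (PairIdx n → ℝ)) [IsProbabilityMeasure σ]
    (hσ : ∀ᵐ θ ∂σ, dualNorm n p θ ≤ 1)
    (ε : ℝ) (hε : 0 < ε)
    (hsignal : ε ^ p ≤ SDMW n p σ dist dist μ ν ^ p)
    (γ δ : ℝ) (hγ : γ ∈ Set.Ioo (0 : ℝ) 1) (hδ : δ ∈ Set.Ioo (0 : ℝ) 1)
    (L : ℕ)
    (hL : R ^ (2 * p) / (2 * γ ^ 2 * ε ^ (2 * p)) * Real.log (1 / δ) ≤ (L : ℝ)) :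
    ENNReal.ofReal (1 - δ) ≤
      (Measure.pi fun _ : Fin L => σ)
        {Θ | (1 - γ) * ε ^ p ≤
          (L : ℝ)⁻¹ * ∑ ℓ : Fin L,
            Wp p (fun s t : ℝ => |s - t|) ((dmLaw n dist μ).map (proj n (Θ ℓ)))
              ((dmLaw n dist ν).map (proj n (Θ ℓ))) ^ p} :=
  finite_direction_separation_general μ ν n p hp R hR σ hσ ε hε hsignal γ δ hγ hδ L hL
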